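/- Let M > 0, B > 0, define r and R as in the binary beam-pointing capacity recursion (r 0 = M, r (j+1) = max (r j / 2) (r j - B), R j = 1 - (r (j-1)/M)(1 - H(min (1/2) (B / r (j-1))))). Then R j → 1 as j → ∞, and consequently the capacity C L = (1/L) ∑_{j=1}^L R j tends to 1 as L → ∞. -/

import Mathlib

noncomputable def binEnt (p : ℝ) : ℝ :=
  -p * Real.log p / Real.log 2 - (1 - p) * Real.log (1 - p) / Real.log 2

open Filter Topology Finset

lemma binEnt_eq_binEntropy_div_log_two (p : ℝ) : binEnt p = Real.binEntropy p / Real.log 2 := by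
  simp only [binEnt, Real.binEntropy, Real.log_inv]
  ring

lemma binEnt_mem_Icc {p : ℝ} (hp₀ : 0 ≤ p) (hp₁ : p ≤ 1) : binEnt p ∈ Set.Icc 0 1 := by
  have hlog2 : 0 < Real.log 2 := Real.log_pos one_lt_two
  rw [binEnt_eq_binEntropy_div_log_two]
  exact ⟨div_nonneg (Real.binEntropy_nonneg hp₀ hp₁) hlog2.le,
    (div_le_one hlog2).2 Real.binEntropy_le_log_two⟩

lemma rate_mem_Icc {M B x : ℝ} (hM : 0 < M) (hB : 0 ≤ B) (hx : 0 ≤ x) :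
    1 - x / M * (1 - binEnt (min (1 / 2) (B / x))) ∈ Set.Icc (1 - x / M) 1 := by
  have hp₀ : 0 ≤ min (1 / 2 : ℝ) (B / x) := le_min (by norm_num) (div_nonneg hB hx)
  have hp₁ : min (1 / 2 : ℝ) (B / x) ≤ 1 := (min_le_left _ _).trans (by norm_num)
  obtain ⟨hH₀, hH₁⟩ := binEnt_mem_Icc hp₀ hp₁
  have hxM : 0 ≤ x / M := div_nonneg hx hM.le
  constructor <;> nlinarith

lemma Filter.Tendsto.cesaro_Icc {u : ℕ → ℝ} {a : ℝ} (h : Tendsto u atTop (𝓝 a)) :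
    Tendsto (fun L : ℕ => (1 / (L : ℝ)) * ∑ j ∈ Icc 1 L, u j) atTop (𝓝 a) := by
  refine (h.comp (tendsto_add_atTop_nat 1)).cesaro.congr fun L => ?_
  rw [← Ico_add_one_right_eq_Icc, sum_Ico_eq_sum_range, one_div, Nat.add_sub_cancel]
  simp only [Function.comp_apply, add_comm]

section Halving

variable {B : ℝ} {r : ℕ → ℝ}

lemma pos_of_halving_step (hr : ∀ j, r (j + 1) = max (r j / 2) (r j - B)) (h₀ : 0 < r 0) :
    ∀ j, 0 < r j
  | 0 => h₀
  | j + 1 => hr j ▸ lt_max_of_lt_left (half_pos (pos_of_halving_step hr h₀ j))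

lemma antitone_of_halving_step (hr : ∀ j, r (j + 1) = max (r j / 2) (r j - B)) (hB : 0 ≤ B)
    (hpos : ∀ j, 0 ≤ r j) : Antitone r :=
  antitone_nat_of_succ_le fun j => hr j ▸ max_le (by linarith [hpos j]) (by linarith)

/- The step `x ↦ max (x / 2) (x - B)` strictly decreases every positive `x`, so its only
nonnegative fixed point, `0`, is the limit of the decreasing sequence `r`. -/
lemma tendsto_zero_of_halving_step (hr : ∀ j, r (j + 1) = max (r j / 2) (r j - B))
    (h₀ : 0 < r 0) (hB : 0 < B) : Tendsto r atTop (𝓝 0) := by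
  have hpos := pos_of_halving_step hr h₀
  have hlim : Tendsto r atTop (𝓝 (⨅ j, r j)) :=
    tendsto_atTop_ciInf (antitone_of_halving_step hr hB.le fun j => (hpos j).le)
      ⟨0, by rintro _ ⟨j, rfl⟩; exact (hpos j).le⟩
  set l := ⨅ j, r j
  have hl₀ : 0 ≤ l := le_ciInf fun j => (hpos j).le
  have hfix : l = max (l / 2) (l - B) :=
    tendsto_nhds_unique (by simpa only [hr] using (tendsto_add_atTop_iff_nat 1).2 hlim)
      ((hlim.div_const 2).max (hlim.sub_const B))
  suffices l = 0 from this ▸ hlim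
  by_contra hl
  have hl_pos : 0 < l := lt_of_le_of_ne hl₀ (Ne.symm hl)
  exact (max_lt (half_lt_self hl_pos) (sub_lt_self l hB)).ne' hfix

end Halving

theorem stmt_12 (M B : ℝ) (hM : 0 < M) (hB : 0 < B)
    (r : ℕ → ℝ) (hr0 : r 0 = M)
    (hr : ∀ j : ℕ, r (j + 1) = max (r j / 2) (r j - B))
    (R : ℕ → ℝ)
    (hR : ∀ j : ℕ, 1 ≤ j →
      R j = 1 - (r (j - 1) / M) * (1 - binEnt (min (1 / 2) (B / r (j - 1))))) :
    Filter.Tendsto R Filter.atTop (nhds 1) ∧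
    Filter.Tendsto (fun L : ℕ => (1 / (L : ℝ)) * ∑ j ∈ Finset.Icc 1 L, R j)
      Filter.atTop (nhds 1) := by
  have h₀ : 0 < r 0 := hr0 ▸ hM
  have hpos := pos_of_halving_step hr h₀
  have hr_lim : Tendsto (fun j => r (j - 1)) atTop (𝓝 0) :=
    (tendsto_zero_of_halving_step hr h₀ hB).comp (tendsto_sub_atTop_nat 1)
  have hlower : Tendsto (fun j => 1 - r (j - 1) / M) atTop (𝓝 1) := by
    simpa using (hr_lim.div_const M).const_sub 1
  have hR_mem : ∀ᶠ j in atTop, R j ∈ Set.Icc (1 - r (j - 1) / M) 1 := by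
    filter_upwards [eventually_ge_atTop 1] with j hj
    exact hR j hj ▸ rate_mem_Icc hM hB.le (hpos _).le
  have hR_lim : Tendsto R atTop (𝓝 1) :=
    tendsto_of_tendsto_of_tendsto_of_le_of_le' hlower tendsto_const_nhds
      (hR_mem.mono fun _ h => h.1) (hR_mem.mono fun _ h => h.2)
  exact ⟨hR_lim, hR_lim.cesaro_Icc⟩
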